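/- arXiv:1309.3384 — 2 statements merged into one kernel-verified Lean document; each statement's English description precedes it below -/
import Mathlib

section
/- Let A be a graded algebra (ungraded or concentrated in degree 0 for simplicity) with a coassociative coproduct δ that is a map of A-bimodules, and suppose δ(1) = Σ 1'⊗1'' = Σ 1''⊗1' (symmetric, degree 0 case). Define on A⊗A (modeling length-zero Hochschild chains tensor coefficients) the product a • b := Σ_{(a)} a''a'b. Then • is associative: (a•b)•c = a•(b•c) for all a,b,c ∈ A. -/
/-!
Write `e = δ 1`. The bimodule property gives `δ z = (z ⊗ 1) e = e (1 ⊗ z)`, and with the symmetry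
of `e` it turns `Σ a'' a'` into `Σ e' a e''`. Since `(z ⊗ 1) e = e (1 ⊗ z)`, every element
`Σ e' u e''` is central, so `a • b = (Σ e' a e'') b` is left multiplication by a central element
`m_a`, and `m_{m_a b} = m_a m_b`; associativity follows.
-/

open TensorProduct

/-- The product `a • b := Σ_{(a)} a'' a' b` built from the coproduct `δ`. -/
noncomputable def frobBullet {k A : Type} [Field k] [Ring A] [Algebra k A]
    (δ : A →ₗ[k] A ⊗[k] A) (a b : A) : A :=
  LinearMap.mul' k A ((TensorProduct.comm k A A) (δ a)) * b

section Sandwich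

variable {R A : Type*} [CommSemiring R] [Semiring A] [Algebra R A]

noncomputable def sandwich (u : A) : A ⊗[R] A →ₗ[R] A :=
  LinearMap.mul' R A ∘ₗ TensorProduct.map (LinearMap.mulRight R u) LinearMap.id

@[simp]
lemma sandwich_tmul (u x y : A) : sandwich (R := R) u (x ⊗ₜ y) = x * u * y := rfl

lemma sandwich_map_mulLeft_id (u z : A) (t : A ⊗[R] A) :
    sandwich u (TensorProduct.map (LinearMap.mulLeft R z) LinearMap.id t) = z * sandwich u t := by
  induction t using TensorProduct.induction_on <;> simp_all [mul_assoc, mul_add]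

lemma sandwich_map_id_mulRight (u z : A) (t : A ⊗[R] A) :
    sandwich u (TensorProduct.map LinearMap.id (LinearMap.mulRight R z) t) = sandwich u t * z := by
  induction t using TensorProduct.induction_on <;> simp_all [mul_assoc, add_mul]

lemma sandwich_mul_of_commute {m : A} (hm : ∀ x, Commute x m) (u : A) (t : A ⊗[R] A) :
    sandwich (m * u) t = m * sandwich u t := by
  induction t using TensorProduct.induction_on with
  | zero => simp
  | tmul x y => simp only [sandwich_tmul, ← mul_assoc, (hm x).eq]
  | add x y hx hy => simp [hx, hy, mul_add]

lemma commute_sandwich_of_balanced {e : A ⊗[R] A}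
    (he : ∀ z, TensorProduct.map (LinearMap.mulLeft R z) LinearMap.id e =
      TensorProduct.map LinearMap.id (LinearMap.mulRight R z) e)
    (u z : A) : Commute z (sandwich u e) := by
  rw [Commute, SemiconjBy, ← sandwich_map_mulLeft_id, he, sandwich_map_id_mulRight]

end Sandwich

lemma map_mulLeft_id_apply_one_eq_map_id_mulRight {R A : Type*} [CommSemiring R] [Semiring A]
    [Algebra R A] (δ : A →ₗ[R] A ⊗[R] A)
    (hright : ∀ x y : A,
      δ (x * y) = (TensorProduct.map LinearMap.id (LinearMap.mulRight R y)) (δ x))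
    (hleft : ∀ x y : A,
      δ (x * y) = (TensorProduct.map (LinearMap.mulLeft R x) LinearMap.id) (δ y)) (z : A) :
    TensorProduct.map (LinearMap.mulLeft R z) LinearMap.id (δ 1) =
      TensorProduct.map LinearMap.id (LinearMap.mulRight R z) (δ 1) := by
  rw [← hleft, ← hright, mul_one, one_mul]

lemma frobBullet_eq_sandwich {k A : Type} [Field k] [Ring A] [Algebra k A]
    (δ : A →ₗ[k] A ⊗[k] A)
    (hright : ∀ x y : A,
      δ (x * y) = (TensorProduct.map LinearMap.id (LinearMap.mulRight k y)) (δ x))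
    (hsymm : (TensorProduct.comm k A A) (δ 1) = δ 1) (a b : A) :
    frobBullet δ a b = sandwich a (δ 1) * b := by
  have hδa : δ a = TensorProduct.map LinearMap.id (LinearMap.mulRight k a) (δ 1) := by
    rw [← hright, one_mul]
  rw [frobBullet, hδa, ← TensorProduct.map_comm, hsymm]
  rfl

theorem frobBullet_assoc_general {k A : Type} [Field k] [Ring A] [Algebra k A]
    (δ : A →ₗ[k] A ⊗[k] A)
    (hright : ∀ x y : A,
      δ (x * y) = (TensorProduct.map LinearMap.id (LinearMap.mulRight k y)) (δ x))
    (hleft : ∀ x y : A,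
      δ (x * y) = (TensorProduct.map (LinearMap.mulLeft k x) LinearMap.id) (δ y))
    (hsymm : (TensorProduct.comm k A A) (δ 1) = δ 1) :
    ∀ a b c : A, frobBullet δ (frobBullet δ a b) c = frobBullet δ a (frobBullet δ b c) := by
  intro a b c
  have hcentral := commute_sandwich_of_balanced
    (map_mulLeft_id_apply_one_eq_map_id_mulRight δ hright hleft)
  simp only [frobBullet_eq_sandwich δ hright hsymm]
  rw [sandwich_mul_of_commute (hcentral a), mul_assoc]

/-- for an (ungraded) algebra `A` with a coassociative coproduct `δ`
which is a map of `A`-bimodules and whose value on `1` is symmetric under the flip,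
the product `a • b := Σ_{(a)} a'' a' b` on `A` (modelling length-zero Hochschild
chains) is associative. -/
theorem frobBullet_assoc {k A : Type} [Field k] [Ring A] [Algebra k A]
    (δ : A →ₗ[k] A ⊗[k] A)
    (hcoassoc : ∀ x : A,
      (TensorProduct.assoc k A A A) ((TensorProduct.map δ LinearMap.id) (δ x)) =
        (TensorProduct.map LinearMap.id δ) (δ x))
    (hright : ∀ x y : A,
      δ (x * y) = (TensorProduct.map LinearMap.id (LinearMap.mulRight k y)) (δ x))
    (hleft : ∀ x y : A,
      δ (x * y) = (TensorProduct.map (LinearMap.mulLeft k x) LinearMap.id) (δ y))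
    (hsymm : (TensorProduct.comm k A A) (δ 1) = δ 1) :
    ∀ a b c : A, frobBullet δ (frobBullet δ a b) c = frobBullet δ a (frobBullet δ b c) :=
  frobBullet_assoc_general δ hright hleft hsymm
end

section
/- Let A be an ungraded symmetric open Frobenius algebra. For x = a[ ] and y = b[ ] length-zero Hochschild chains, the element K(x,y) := Σ_{(a)} a''[a'b] of C_1(A,A) satisfies d_1(K(x,y)) = Σ_{(a)} a''a'b − Σ_{(b)} b''b'a, where d_1 is the external Hochschild differential d_1(c_0[c_1]) = c_0c_1[ ] − c_1c_0[ ]. That is, the products x•y = Σ a''a'b and y•x = Σ b''b'a are homologous in degree 0 Hochschild homology. -/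
/-!
The boundary of `Σ a''[a'b]` is `Σ a''a'b − Σ a'ba''`, so everything reduces to
`Σ_{(a)} a'ba'' = Σ_{(b)} b''b'a`. Both sides come from the single tensor `δ 1`:
the bimodule property gives `δ a = Σ 1' ⊗ 1''a` and `δ b = Σ b1' ⊗ 1''`, so the left side is
`Σ 1'b1''a` and the right side is `Σ 1''b1'a`, and these agree because `δ 1` is flip-invariant.
-/

open TensorProduct

section

variable {k A : Type*} [CommSemiring k] [Semiring A] [Algebra k A]

theorem mul'_map_map_mulRight (f : A →ₗ[k] A) (a : A) (t : A ⊗[k] A) :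
    LinearMap.mul' k A (map f LinearMap.id (map LinearMap.id (LinearMap.mulRight k a) t)) =
      LinearMap.mul' k A (map f LinearMap.id t) * a := by
  induction t using TensorProduct.induction_on with
  | zero => simp
  | tmul x y => simp [mul_assoc]
  | add x y hx hy => simp only [map_add, hx, hy, add_mul]

theorem mul'_comm_map_mulLeft (b : A) (t : A ⊗[k] A) :
    LinearMap.mul' k A (TensorProduct.comm k A A (map (LinearMap.mulLeft k b) LinearMap.id t)) =
      LinearMap.mul' k A (map (LinearMap.mulRight k b) LinearMap.id (TensorProduct.comm k A A t)) := by
  induction t using TensorProduct.induction_on with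
  | zero => simp
  | tmul x y => simp [mul_assoc]
  | add x y hx hy => simp only [map_add, hx, hy]

theorem mul'_map_mulRight_comul (δ : A →ₗ[k] A ⊗[k] A)
    (hright : ∀ x y : A, δ (x * y) = map LinearMap.id (LinearMap.mulRight k y) (δ x))
    (hleft : ∀ x y : A, δ (x * y) = map (LinearMap.mulLeft k x) LinearMap.id (δ y))
    (hsymm : TensorProduct.comm k A A (δ 1) = δ 1) (a b : A) :
    LinearMap.mul' k A (map (LinearMap.mulRight k b) LinearMap.id (δ a)) =
      LinearMap.mul' k A (TensorProduct.comm k A A (δ b)) * a := by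
  have hδa : δ a = map LinearMap.id (LinearMap.mulRight k a) (δ 1) := by
    simpa using hright 1 a
  have hδb : δ b = map (LinearMap.mulLeft k b) LinearMap.id (δ 1) := by
    simpa using hleft b 1
  rw [hδa, hδb, mul'_map_map_mulRight, mul'_comm_map_mulLeft, hsymm]

end

theorem bullet_comm_up_to_boundary_general {k A : Type} [Field k] [Ring A] [Algebra k A]
    (δ : A →ₗ[k] A ⊗[k] A)
    (hright : ∀ x y : A,
      δ (x * y) = (TensorProduct.map LinearMap.id (LinearMap.mulRight k y)) (δ x))
    (hleft : ∀ x y : A,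
      δ (x * y) = (TensorProduct.map (LinearMap.mulLeft k x) LinearMap.id) (δ y))
    (hsymm : (TensorProduct.comm k A A) (δ 1) = δ 1) :
    ∀ a b : A,
      -- d₁(Σ_{(a)} a''[a'b]) = Σ_{(a)} a''·(a'b) − Σ_{(a)} (a'b)·a''
      LinearMap.mul' k A ((TensorProduct.comm k A A) (δ a)) * b -
        LinearMap.mul' k A
          ((TensorProduct.map (LinearMap.mulRight k b) LinearMap.id) (δ a)) =
      -- x•y − y•x
      LinearMap.mul' k A ((TensorProduct.comm k A A) (δ a)) * b -
        LinearMap.mul' k A ((TensorProduct.comm k A A) (δ b)) * a := by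
  intro a b
  rw [mul'_map_mulRight_comul δ hright hleft hsymm]

/-- in an ungraded symmetric open Frobenius algebra, for length-zero
Hochschild chains `x = a[ ]`, `y = b[ ]`, the degree-one chain
`K(x,y) = Σ_{(a)} a''[a'b]` satisfies
`d₁(K(x,y)) = Σ_{(a)} a''a'b − Σ_{(b)} b''b'a`, where
`d₁(c₀[c₁]) = c₀c₁ − c₁c₀`; i.e. the products `x•y` and `y•x` are homologous. -/
theorem bullet_comm_up_to_boundary {k A : Type} [Field k] [Ring A] [Algebra k A]
    (δ : A →ₗ[k] A ⊗[k] A)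
    (hcoassoc : ∀ x : A,
      (TensorProduct.assoc k A A A) ((TensorProduct.map δ LinearMap.id) (δ x)) =
        (TensorProduct.map LinearMap.id δ) (δ x))
    (hright : ∀ x y : A,
      δ (x * y) = (TensorProduct.map LinearMap.id (LinearMap.mulRight k y)) (δ x))
    (hleft : ∀ x y : A,
      δ (x * y) = (TensorProduct.map (LinearMap.mulLeft k x) LinearMap.id) (δ y))
    (hsymm : (TensorProduct.comm k A A) (δ 1) = δ 1) :
    ∀ a b : A,
      -- d₁(Σ_{(a)} a''[a'b]) = Σ_{(a)} a''·(a'b) − Σ_{(a)} (a'b)·a''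
      LinearMap.mul' k A ((TensorProduct.comm k A A) (δ a)) * b -
        LinearMap.mul' k A
          ((TensorProduct.map (LinearMap.mulRight k b) LinearMap.id) (δ a)) =
      -- x•y − y•x
      LinearMap.mul' k A ((TensorProduct.comm k A A) (δ a)) * b -
        LinearMap.mul' k A ((TensorProduct.comm k A A) (δ b)) * a :=
  bullet_comm_up_to_boundary_general δ hright hleft hsymm
end
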